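/- arXiv:math/0610786 — 2 statements merged into one kernel-verified Lean document; each statement's English description precedes it below -/
import Mathlib

section
/- If u, v are smooth periodic functions satisfying the two-component system m_t + m_x u + 2m u_x + p v_x = 0 and p_t + (pu)_x = 0 with m = εu - εu_xx + αv - βv_x and p = αu + βu_x + γv, then the total momentum ∫_{S¹} m dx is conserved in time: d/dt ∫_{S¹} m dx = 0. -/
open Real intervalIntegral

private lemma periodic_deriv'' {f : ℝ → ℝ} {c : ℝ} (hf : Function.Periodic f c) :
    Function.Periodic (deriv f) c := fun x => by
  have h : (fun y => f (y + c)) = f := funext fun y => hf y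
  calc deriv f (x + c) = deriv (fun y => f (y + c)) x := (deriv_comp_add_const f c x).symm
  _ = deriv f x := by rw [h]

private lemma hasDerivAt_pd {f : ℝ → ℝ → ℝ} (hf : ContDiff ℝ (⊤ : ℕ∞) (Function.uncurry f))
    (t x : ℝ) :
    HasDerivAt (f t) (fderiv ℝ (Function.uncurry f) (t, x) ((0 : ℝ), (1 : ℝ))) x := by
  have hF : HasFDerivAt (Function.uncurry f) (fderiv ℝ (Function.uncurry f) (t, x)) (t, x) :=
    (hf.differentiable (by simp) (t, x)).hasFDerivAt
  have hg : HasDerivAt (fun y : ℝ => ((t, y) : ℝ × ℝ)) ((0 : ℝ), (1 : ℝ)) x :=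
    (hasDerivAt_const x t).prodMk (hasDerivAt_id x)
  exact hF.comp_hasDerivAt x hg

private lemma smooth_pd {f : ℝ → ℝ → ℝ} (hf : ContDiff ℝ (⊤ : ℕ∞) (Function.uncurry f)) :
    ContDiff ℝ (⊤ : ℕ∞) (Function.uncurry fun t x => deriv (f t) x) := by
  have h1 : ContDiff ℝ (⊤ : ℕ∞)
      (fun q : ℝ × ℝ => fderiv ℝ (Function.uncurry f) q ((0 : ℝ), (1 : ℝ))) :=
    (hf.fderiv_right (by simp)).clm_apply contDiff_const
  have h2 : (Function.uncurry fun t x => deriv (f t) x)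
      = fun q : ℝ × ℝ => fderiv ℝ (Function.uncurry f) q ((0 : ℝ), (1 : ℝ)) :=
    funext fun q => (hasDerivAt_pd hf q.1 q.2).deriv
  rw [h2]; exact h1

private lemma smooth_td {f : ℝ → ℝ → ℝ} (hf : ContDiff ℝ (⊤ : ℕ∞) (Function.uncurry f)) :
    ContDiff ℝ (⊤ : ℕ∞) (Function.uncurry fun t x => deriv (fun s => f s x) t) := by
  have hswap : ContDiff ℝ (⊤ : ℕ∞) (Function.uncurry fun x t => f t x) :=
    hf.comp (contDiff_snd.prodMk contDiff_fst)
  exact (smooth_pd hswap).comp (contDiff_snd.prodMk contDiff_fst)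

theorem momentum_m_conserved
    (u v m p : ℝ → ℝ → ℝ) (ε α β γ : ℝ)
    (hu : ContDiff ℝ (⊤ : ℕ∞) (Function.uncurry u)) (hv : ContDiff ℝ (⊤ : ℕ∞) (Function.uncurry v))
    (hup : ∀ t, Function.Periodic (u t) (2 * π))
    (hvp : ∀ t, Function.Periodic (v t) (2 * π))
    (hm : ∀ t x, m t x = ε * u t x - ε * iteratedDeriv 2 (u t) x
        + α * v t x - β * deriv (v t) x)
    (hp : ∀ t x, p t x = α * u t x + β * deriv (u t) x + γ * v t x)
    (heq1 : ∀ t x, deriv (fun s => m s x) t + deriv (m t) x * u t x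
        + 2 * m t x * deriv (u t) x + p t x * deriv (v t) x = 0)
    (heq2 : ∀ t x, deriv (fun s => p s x) t + deriv (fun y => p t y * u t y) x = 0) :
    ∀ t, deriv (fun s => ∫ x in (0:ℝ)..(2 * π), m s x) t = 0 := by
  -- smoothness of slices of u and v
  have hut : ∀ t, ContDiff ℝ (⊤ : ℕ∞) (u t) := fun t => hu.comp (contDiff_const.prodMk contDiff_id)
  have hvt : ∀ t, ContDiff ℝ (⊤ : ℕ∞) (v t) := fun t => hv.comp (contDiff_const.prodMk contDiff_id)
  -- spatial derivatives, jointly smooth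
  have hu1 : ContDiff ℝ (⊤ : ℕ∞) (Function.uncurry fun t x => deriv (u t) x) := smooth_pd hu
  have hu2 : ContDiff ℝ (⊤ : ℕ∞) (Function.uncurry fun t x => deriv (deriv (u t)) x) := by
    have := smooth_pd hu1
    exact this
  have hv1 : ContDiff ℝ (⊤ : ℕ∞) (Function.uncurry fun t x => deriv (v t) x) := smooth_pd hv
  have hu1t : ∀ t, ContDiff ℝ (⊤ : ℕ∞) (deriv (u t)) := fun t =>
    hu1.comp (contDiff_const.prodMk contDiff_id)
  have hu2t : ∀ t, ContDiff ℝ (⊤ : ℕ∞) (deriv (deriv (u t))) := fun t =>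
    hu2.comp (contDiff_const.prodMk contDiff_id)
  have hv1t : ∀ t, ContDiff ℝ (⊤ : ℕ∞) (deriv (v t)) := fun t =>
    hv1.comp (contDiff_const.prodMk contDiff_id)
  -- iterated derivative as double derivative
  have hiter : ∀ t, iteratedDeriv 2 (u t) = deriv (deriv (u t)) := fun t => by
    rw [iteratedDeriv_succ, iteratedDeriv_one]
  -- joint smoothness of m
  have hmC : ContDiff ℝ (⊤ : ℕ∞) (Function.uncurry m) := by
    have h : Function.uncurry m = fun q : ℝ × ℝ =>
        ε * u q.1 q.2 - ε * deriv (deriv (u q.1)) q.2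
          + α * v q.1 q.2 - β * deriv (v q.1) q.2 := by
      funext q
      show m q.1 q.2 = _
      rw [hm q.1 q.2, hiter q.1]
    rw [h]
    exact (((contDiff_const.mul hu).sub (contDiff_const.mul hu2)).add
      (contDiff_const.mul hv)).sub (contDiff_const.mul hv1)
  have hmt : ∀ t, ContDiff ℝ (⊤ : ℕ∞) (m t) := fun t => hmC.comp (contDiff_const.prodMk contDiff_id)
  -- time derivative of m, jointly smooth
  have hmtd : ContDiff ℝ (⊤ : ℕ∞) (Function.uncurry fun t x => deriv (fun s => m s x) t) :=
    smooth_td hmC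
  have hmtdc : Continuous (Function.uncurry fun t x => deriv (fun s => m s x) t) :=
    hmtd.continuous
  -- periodicity of m
  have hu1p : ∀ t, Function.Periodic (deriv (u t)) (2 * π) := fun t => periodic_deriv'' (hup t)
  have hu2p : ∀ t, Function.Periodic (deriv (deriv (u t))) (2 * π) := fun t =>
    periodic_deriv'' (hu1p t)
  have hv1p : ∀ t, Function.Periodic (deriv (v t)) (2 * π) := fun t => periodic_deriv'' (hvp t)
  have hmp : ∀ t, Function.Periodic (m t) (2 * π) := fun t x => by
    rw [hm t, hm t, hiter t, hup t x, hvp t x, hu2p t x, hv1p t x]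
  intro t
  -- Step 1: differentiate under the integral sign
  have hcont_mt : ∀ s, Continuous (fun x => deriv (fun r => m r x) s) := fun s =>
    hmtdc.comp (continuous_const.prodMk continuous_id)
  have hcont_ms : ∀ s, Continuous (m s) := fun s => (hmt s).continuous
  -- bound on the derivative on a compact set
  obtain ⟨C, hC⟩ : ∃ C, ∀ q ∈ (Set.Icc (t - 1) (t + 1)) ×ˢ (Set.uIcc (0:ℝ) (2 * π)),
      ‖(Function.uncurry fun t x => deriv (fun s => m s x) t) q‖ ≤ C :=
    (isCompact_Icc.prod isCompact_uIcc).exists_bound_of_continuousOn hmtdc.continuousOn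
  have key := intervalIntegral.hasDerivAt_integral_of_dominated_loc_of_deriv_le
    (F := fun s x => m s x) (F' := fun s x => deriv (fun r => m r x) s)
    (x₀ := t) (a := 0) (b := 2 * π) (bound := fun _ => C) (μ := MeasureTheory.volume)
    (s := Metric.ball t 1) (Metric.ball_mem_nhds t one_pos)
    (Filter.Eventually.of_forall fun s => (hcont_ms s).aestronglyMeasurable)
    ((hcont_ms t).intervalIntegrable _ _)
    ((hcont_mt t).aestronglyMeasurable)
    (MeasureTheory.ae_of_all _ fun x hx s hs => by
      refine hC (s, x) ⟨?_, Set.uIoc_subset_uIcc hx⟩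
      have : s ∈ Set.Ioo (t - 1) (t + 1) := by rwa [Real.ball_eq_Ioo] at hs
      exact Set.Ioo_subset_Icc_self this)
    (intervalIntegrable_const)
    (MeasureTheory.ae_of_all _ fun x hx s hs =>
      (((hmC.comp (contDiff_id.prodMk contDiff_const)).differentiable (by simp) s).hasDerivAt))
  have hderiv := key.2
  -- Step 2: the integral of the time derivative vanishes
  have hzero : (∫ x in (0:ℝ)..(2 * π), deriv (fun r => m r x) t) = 0 := by
    set H : ℝ → ℝ := fun x => m t x * u t x + ε / 2 * (u t x * u t x)
      - ε / 2 * (deriv (u t) x * deriv (u t) x) + α * (u t x * v t x)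
      + γ / 2 * (v t x * v t x) with hHdef
    have hH : ∀ x, HasDerivAt H (-(deriv (fun r => m r x) t)) x := by
      intro x
      have hmx : HasDerivAt (m t) (deriv (m t) x) x :=
        (((hmt t).differentiable (by simp)) x).hasDerivAt
      have hux : HasDerivAt (u t) (deriv (u t) x) x :=
        (((hut t).differentiable (by simp)) x).hasDerivAt
      have hu1x : HasDerivAt (deriv (u t)) (deriv (deriv (u t)) x) x :=
        (((hu1t t).differentiable (by simp)) x).hasDerivAt
      have hvx : HasDerivAt (v t) (deriv (v t) x) x :=
        (((hvt t).differentiable (by simp)) x).hasDerivAt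
      have hA := hmx.mul hux
      have hB := (hux.mul hux).const_mul (ε / 2)
      have hC2 := (hu1x.mul hu1x).const_mul (ε / 2)
      have hD := (hux.mul hvx).const_mul α
      have hE := (hvx.mul hvx).const_mul (γ / 2)
      have hsum := (((hA.add hB).sub hC2).add hD).add hE
      have heqd : deriv (m t) x * u t x + m t x * deriv (u t) x
          + ε / 2 * (deriv (u t) x * u t x + u t x * deriv (u t) x)
          - ε / 2 * (deriv (deriv (u t)) x * deriv (u t) x
            + deriv (u t) x * deriv (deriv (u t)) x)
          + α * (deriv (u t) x * v t x + u t x * deriv (v t) x)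
          + γ / 2 * (deriv (v t) x * v t x + v t x * deriv (v t) x)
          = -(deriv (fun r => m r x) t) := by
        have h1 := heq1 t x
        have h2 := hm t x
        have h3 := hp t x
        rw [hiter t] at h2
        have hmtval : deriv (fun r => m r x) t = -(deriv (m t) x * u t x
            + 2 * m t x * deriv (u t) x + p t x * deriv (v t) x) := by linarith
        rw [hmtval, h2, h3]
        ring
      exact heqd ▸ hsum
    have hint : (∫ x in (0:ℝ)..(2 * π), -(deriv (fun r => m r x) t)) = H (2 * π) - H 0 :=
      intervalIntegral.integral_eq_sub_of_hasDerivAt (fun x _ => hH x)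
        (((hcont_mt t).neg).intervalIntegrable _ _)
    have hHper : H (2 * π) = H 0 := by
      have h0 : H (0 + 2 * π) = H 0 := by
        simp only [hHdef]
        rw [hmp t 0, hup t 0, hu1p t 0, hvp t 0]
      rwa [zero_add] at h0
    have : (∫ x in (0:ℝ)..(2 * π), -(deriv (fun r => m r x) t)) = 0 := by
      rw [hint, hHper, sub_self]
    rwa [intervalIntegral.integral_neg, neg_eq_zero] at this
  rw [hderiv.deriv, hzero]
end

section
/- The Virasoro-type 2-cocycle condition: ω((f,a),(g,b)) = ∫_{S¹}(c₁ f' g'' + c₂ (f' b' - g' a') + 2c₃ a b') dx defines a 2-cocycle on the Lie algebra Vect(S¹) ⋉ C^∞(S¹) with bracket [(f,a),(g,b)] = (fg' - f'g, fb' - ga'): it is antisymmetric and satisfies ω([(f,a),(g,b)],(h,c)) + ω([(g,b),(h,c)],(f,a)) + ω([(h,c),(f,a)],(g,b)) = 0. -/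
open Real intervalIntegral
open scoped ContDiff

/-- The bracket on `Vect(S¹) ⋉ C^∞(S¹)`. -/
noncomputable def sdBracket (X Y : (ℝ → ℝ) × (ℝ → ℝ)) : (ℝ → ℝ) × (ℝ → ℝ) :=
  (fun x => X.1 x * deriv Y.1 x - deriv X.1 x * Y.1 x,
   fun x => X.1 x * deriv Y.2 x - Y.1 x * deriv X.2 x)

/-- The Virasoro-type 2-cochain with parameters `c₁ c₂ c₃`. -/
noncomputable def sdCocycle (c₁ c₂ c₃ : ℝ) (X Y : (ℝ → ℝ) × (ℝ → ℝ)) : ℝ :=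
  ∫ x in (0:ℝ)..(2 * π),
    c₁ * deriv X.1 x * iteratedDeriv 2 Y.1 x
    + c₂ * (deriv X.1 x * deriv Y.2 x - deriv Y.1 x * deriv X.2 x)
    + 2 * c₃ * X.2 x * deriv Y.2 x

lemma sd_per_deriv {u : ℝ → ℝ} {T : ℝ} (hu : Function.Periodic u T) :
    Function.Periodic (deriv u) T := by
  intro x
  have huu : (fun y => u (y + T)) = u := funext fun y => hu y
  calc deriv u (x + T) = deriv (fun y => u (y + T)) x := (deriv_comp_add_const u T x).symm
    _ = deriv u x := by rw [huu]

lemma sd_per_int (u : ℝ → ℝ) (hu : ContDiff ℝ ∞ u) (hup : Function.Periodic u (2*π)) :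
    ∫ x in (0:ℝ)..(2*π), deriv u x = 0 := by
  rw [integral_deriv_eq_sub (fun x _ => (hu.differentiable (by norm_num)).differentiableAt)
    ((hu.continuous_deriv (by norm_num)).intervalIntegrable _ _)]
  have := hup 0
  simp at this
  rw [this]; ring

lemma sd_iter2 (u : ℝ → ℝ) : iteratedDeriv 2 u = deriv (deriv u) := by
  rw [iteratedDeriv_succ, iteratedDeriv_one]

theorem virasoro_type_two_cocycle
    (c₁ c₂ c₃ : ℝ)
    (f a g b h c : ℝ → ℝ)
    (hf : ContDiff ℝ (⊤ : ℕ∞) f) (ha : ContDiff ℝ (⊤ : ℕ∞) a) (hg : ContDiff ℝ (⊤ : ℕ∞) g)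
    (hb : ContDiff ℝ (⊤ : ℕ∞) b) (hh : ContDiff ℝ (⊤ : ℕ∞) h) (hc : ContDiff ℝ (⊤ : ℕ∞) c)
    (hfp : Function.Periodic f (2 * π)) (hap : Function.Periodic a (2 * π))
    (hgp : Function.Periodic g (2 * π)) (hbp : Function.Periodic b (2 * π))
    (hhp : Function.Periodic h (2 * π)) (hcp : Function.Periodic c (2 * π)) :
    sdCocycle c₁ c₂ c₃ (f, a) (g, b) = - sdCocycle c₁ c₂ c₃ (g, b) (f, a) ∧
    sdCocycle c₁ c₂ c₃ (sdBracket (f, a) (g, b)) (h, c)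
      + sdCocycle c₁ c₂ c₃ (sdBracket (g, b) (h, c)) (f, a)
      + sdCocycle c₁ c₂ c₃ (sdBracket (h, c) (f, a)) (g, b) = 0 := by
  -- downgrade to C^∞ and collect basic facts
  have hf0 : ContDiff ℝ ∞ f := hf.of_le (by simp)
  have ha0 : ContDiff ℝ ∞ a := ha.of_le (by simp)
  have hg0 : ContDiff ℝ ∞ g := hg.of_le (by simp)
  have hb0 : ContDiff ℝ ∞ b := hb.of_le (by simp)
  have hh0 : ContDiff ℝ ∞ h := hh.of_le (by simp)
  have hc0 : ContDiff ℝ ∞ c := hc.of_le (by simp)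
  have hf1 : ContDiff ℝ ∞ (deriv f) := (contDiff_infty_iff_deriv.mp hf0).2
  have ha1 : ContDiff ℝ ∞ (deriv a) := (contDiff_infty_iff_deriv.mp ha0).2
  have hg1 : ContDiff ℝ ∞ (deriv g) := (contDiff_infty_iff_deriv.mp hg0).2
  have hb1 : ContDiff ℝ ∞ (deriv b) := (contDiff_infty_iff_deriv.mp hb0).2
  have hh1 : ContDiff ℝ ∞ (deriv h) := (contDiff_infty_iff_deriv.mp hh0).2
  have hc1 : ContDiff ℝ ∞ (deriv c) := (contDiff_infty_iff_deriv.mp hc0).2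
  have hf2 : ContDiff ℝ ∞ (deriv (deriv f)) := (contDiff_infty_iff_deriv.mp hf1).2
  have ha2 : ContDiff ℝ ∞ (deriv (deriv a)) := (contDiff_infty_iff_deriv.mp ha1).2
  have hg2 : ContDiff ℝ ∞ (deriv (deriv g)) := (contDiff_infty_iff_deriv.mp hg1).2
  have hb2 : ContDiff ℝ ∞ (deriv (deriv b)) := (contDiff_infty_iff_deriv.mp hb1).2
  have hh2 : ContDiff ℝ ∞ (deriv (deriv h)) := (contDiff_infty_iff_deriv.mp hh1).2
  have hc2 : ContDiff ℝ ∞ (deriv (deriv c)) := (contDiff_infty_iff_deriv.mp hc1).2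
  -- HasDerivAt facts
  have Hf : ∀ x, HasDerivAt f (deriv f x) x := fun x =>
    ((hf0.differentiable (by norm_num)).differentiableAt).hasDerivAt
  have Ha : ∀ x, HasDerivAt a (deriv a x) x := fun x =>
    ((ha0.differentiable (by norm_num)).differentiableAt).hasDerivAt
  have Hg : ∀ x, HasDerivAt g (deriv g x) x := fun x =>
    ((hg0.differentiable (by norm_num)).differentiableAt).hasDerivAt
  have Hb : ∀ x, HasDerivAt b (deriv b x) x := fun x =>
    ((hb0.differentiable (by norm_num)).differentiableAt).hasDerivAt
  have Hh : ∀ x, HasDerivAt h (deriv h x) x := fun x =>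
    ((hh0.differentiable (by norm_num)).differentiableAt).hasDerivAt
  have Hc : ∀ x, HasDerivAt c (deriv c x) x := fun x =>
    ((hc0.differentiable (by norm_num)).differentiableAt).hasDerivAt
  have Hf' : ∀ x, HasDerivAt (deriv f) (deriv (deriv f) x) x := fun x =>
    ((hf1.differentiable (by norm_num)).differentiableAt).hasDerivAt
  have Ha' : ∀ x, HasDerivAt (deriv a) (deriv (deriv a) x) x := fun x =>
    ((ha1.differentiable (by norm_num)).differentiableAt).hasDerivAt
  have Hg' : ∀ x, HasDerivAt (deriv g) (deriv (deriv g) x) x := fun x =>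
    ((hg1.differentiable (by norm_num)).differentiableAt).hasDerivAt
  have Hb' : ∀ x, HasDerivAt (deriv b) (deriv (deriv b) x) x := fun x =>
    ((hb1.differentiable (by norm_num)).differentiableAt).hasDerivAt
  have Hh' : ∀ x, HasDerivAt (deriv h) (deriv (deriv h) x) x := fun x =>
    ((hh1.differentiable (by norm_num)).differentiableAt).hasDerivAt
  have Hc' : ∀ x, HasDerivAt (deriv c) (deriv (deriv c) x) x := fun x =>
    ((hc1.differentiable (by norm_num)).differentiableAt).hasDerivAt
  -- derivative of first bracket component
  have dB1 : ∀ (u v : ℝ → ℝ), (∀ x, HasDerivAt u (deriv u x) x) →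
      (∀ x, HasDerivAt v (deriv v x) x) →
      (∀ x, HasDerivAt (deriv u) (deriv (deriv u) x) x) →
      (∀ x, HasDerivAt (deriv v) (deriv (deriv v) x) x) →
      deriv (fun x => u x * deriv v x - deriv u x * v x)
        = fun x => u x * deriv (deriv v) x - deriv (deriv u) x * v x := by
    intro u v Hu Hv Hu' Hv'
    funext x
    have : HasDerivAt (fun x => u x * deriv v x - deriv u x * v x)
        (u x * deriv (deriv v) x - deriv (deriv u) x * v x) x := by
      have := ((Hu x).mul (Hv' x)).sub ((Hu' x).mul (Hv x))
      exact this.congr_deriv (by ring)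
    exact this.deriv
  -- derivative of second bracket component
  have dB2 : ∀ (u v p q : ℝ → ℝ), (∀ x, HasDerivAt u (deriv u x) x) →
      (∀ x, HasDerivAt v (deriv v x) x) →
      (∀ x, HasDerivAt (deriv p) (deriv (deriv p) x) x) →
      (∀ x, HasDerivAt (deriv q) (deriv (deriv q) x) x) →
      deriv (fun x => u x * deriv p x - v x * deriv q x)
        = fun x => deriv u x * deriv p x + u x * deriv (deriv p) x
            - (deriv v x * deriv q x + v x * deriv (deriv q) x) := by
    intro u v p q Hu Hv Hp' Hq'
    funext x
    exact (((Hu x).mul (Hp' x)).sub ((Hv x).mul (Hq' x))).deriv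
  have eBfg := dB1 f g Hf Hg Hf' Hg'
  have eBgh := dB1 g h Hg Hh Hg' Hh'
  have eBhf := dB1 h f Hh Hf Hh' Hf'
  have eAfg := dB2 f g b a Hf Hg Hb' Ha'
  have eAgh := dB2 g h c b Hg Hh Hc' Hb'
  have eAhf := dB2 h f a c Hh Hf Ha' Hc'
  constructor
  · -- antisymmetry
    have key : sdCocycle c₁ c₂ c₃ (f, a) (g, b) + sdCocycle c₁ c₂ c₃ (g, b) (f, a) = 0 := by
      have hQ : ContDiff ℝ ∞ (fun x => c₁ * (deriv f x * deriv g x) + 2 * c₃ * (a x * b x)) := by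
        exact (contDiff_const.mul (hf1.mul hg1)).add (contDiff_const.mul (ha0.mul hb0))
      have hQp : Function.Periodic
          (fun x => c₁ * (deriv f x * deriv g x) + 2 * c₃ * (a x * b x)) (2 * π) := by
        intro x
        simp only [sd_per_deriv hfp x, sd_per_deriv hgp x, hap x, hbp x]
      have hint := sd_per_int _ hQ hQp
      have i1 : IntervalIntegrable (fun x =>
          c₁ * deriv f x * iteratedDeriv 2 g x
          + c₂ * (deriv f x * deriv b x - deriv g x * deriv a x)
          + 2 * c₃ * a x * deriv b x) MeasureTheory.volume 0 (2 * π) := by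
        rw [sd_iter2]
        exact (((continuous_const.mul (hf1.continuous)).mul (hg2.continuous)).add
          (continuous_const.mul (((hf1.continuous).mul (hb1.continuous)).sub
            ((hg1.continuous).mul (ha1.continuous)))) |>.add
          ((continuous_const.mul (ha0.continuous)).mul (hb1.continuous))).intervalIntegrable _ _
      have i2 : IntervalIntegrable (fun x =>
          c₁ * deriv g x * iteratedDeriv 2 f x
          + c₂ * (deriv g x * deriv a x - deriv f x * deriv b x)
          + 2 * c₃ * b x * deriv a x) MeasureTheory.volume 0 (2 * π) := by
        rw [sd_iter2]
        exact (((continuous_const.mul (hg1.continuous)).mul (hf2.continuous)).add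
          (continuous_const.mul (((hg1.continuous).mul (ha1.continuous)).sub
            ((hf1.continuous).mul (hb1.continuous)))) |>.add
          ((continuous_const.mul (hb0.continuous)).mul (ha1.continuous))).intervalIntegrable _ _
      have key2 : (∫ x in (0:ℝ)..(2*π), (c₁ * deriv f x * iteratedDeriv 2 g x
          + c₂ * (deriv f x * deriv b x - deriv g x * deriv a x)
          + 2 * c₃ * a x * deriv b x
          + (c₁ * deriv g x * iteratedDeriv 2 f x
          + c₂ * (deriv g x * deriv a x - deriv f x * deriv b x)
          + 2 * c₃ * b x * deriv a x)))
          = ∫ x in (0:ℝ)..(2*π), deriv (fun x => c₁ * (deriv f x * deriv g x)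
              + 2 * c₃ * (a x * b x)) x := by
        apply intervalIntegral.integral_congr
        intro x _
        have dQ : deriv (fun x => c₁ * (deriv f x * deriv g x) + 2 * c₃ * (a x * b x)) x
            = c₁ * (deriv (deriv f) x * deriv g x + deriv f x * deriv (deriv g) x)
              + 2 * c₃ * (deriv a x * b x + a x * deriv b x) :=
          ((((Hf' x).mul (Hg' x)).const_mul c₁).add (((Ha x).mul (Hb x)).const_mul (2 * c₃))).deriv
        rw [sd_iter2, sd_iter2, dQ]
        ring
      rw [sdCocycle, sdCocycle]
      simp only
      rw [← intervalIntegral.integral_add i1 i2, key2, hint]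
    linarith [key]
  · -- cocycle identity
    -- continuity facts
    have cf0 := hf0.continuous; have cf1 := hf1.continuous; have cf2 := hf2.continuous
    have ca0 := ha0.continuous; have ca1 := ha1.continuous; have ca2 := ha2.continuous
    have cg0 := hg0.continuous; have cg1 := hg1.continuous; have cg2 := hg2.continuous
    have cb0 := hb0.continuous; have cb1 := hb1.continuous; have cb2 := hb2.continuous
    have ch0 := hh0.continuous; have ch1 := hh1.continuous; have ch2 := hh2.continuous
    have cc0 := hc0.continuous; have cc1 := hc1.continuous; have cc2 := hc2.continuous
    set I1 : ℝ → ℝ := fun x =>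
      c₁ * (f x * deriv (deriv g) x - deriv (deriv f) x * g x) * deriv (deriv h) x
      + c₂ * ((f x * deriv (deriv g) x - deriv (deriv f) x * g x) * deriv c x
        - deriv h x * (deriv f x * deriv b x + f x * deriv (deriv b) x
            - (deriv g x * deriv a x + g x * deriv (deriv a) x)))
      + 2 * c₃ * (f x * deriv b x - g x * deriv a x) * deriv c x with hI1
    set I2 : ℝ → ℝ := fun x =>
      c₁ * (g x * deriv (deriv h) x - deriv (deriv g) x * h x) * deriv (deriv f) x
      + c₂ * ((g x * deriv (deriv h) x - deriv (deriv g) x * h x) * deriv a x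
        - deriv f x * (deriv g x * deriv c x + g x * deriv (deriv c) x
            - (deriv h x * deriv b x + h x * deriv (deriv b) x)))
      + 2 * c₃ * (g x * deriv c x - h x * deriv b x) * deriv a x with hI2
    set I3 : ℝ → ℝ := fun x =>
      c₁ * (h x * deriv (deriv f) x - deriv (deriv h) x * f x) * deriv (deriv g) x
      + c₂ * ((h x * deriv (deriv f) x - deriv (deriv h) x * f x) * deriv b x
        - deriv g x * (deriv h x * deriv a x + h x * deriv (deriv a) x
            - (deriv f x * deriv c x + f x * deriv (deriv c) x)))
      + 2 * c₃ * (h x * deriv a x - f x * deriv c x) * deriv b x with hI3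
    have E1 : sdCocycle c₁ c₂ c₃ (sdBracket (f, a) (g, b)) (h, c)
        = ∫ x in (0:ℝ)..(2*π), I1 x := by
      rw [sdCocycle]
      apply intervalIntegral.integral_congr
      intro x _
      simp only [sdBracket, eBfg, eAfg, sd_iter2, hI1]
    have E2 : sdCocycle c₁ c₂ c₃ (sdBracket (g, b) (h, c)) (f, a)
        = ∫ x in (0:ℝ)..(2*π), I2 x := by
      rw [sdCocycle]
      apply intervalIntegral.integral_congr
      intro x _
      simp only [sdBracket, eBgh, eAgh, sd_iter2, hI2]
    have E3 : sdCocycle c₁ c₂ c₃ (sdBracket (h, c) (f, a)) (g, b)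
        = ∫ x in (0:ℝ)..(2*π), I3 x := by
      rw [sdCocycle]
      apply intervalIntegral.integral_congr
      intro x _
      simp only [sdBracket, eBhf, eAhf, sd_iter2, hI3]
    have i1 : IntervalIntegrable I1 MeasureTheory.volume 0 (2*π) := by
      apply Continuous.intervalIntegrable; rw [hI1]; fun_prop
    have i2 : IntervalIntegrable I2 MeasureTheory.volume 0 (2*π) := by
      apply Continuous.intervalIntegrable; rw [hI2]; fun_prop
    have i3 : IntervalIntegrable I3 MeasureTheory.volume 0 (2*π) := by
      apply Continuous.intervalIntegrable; rw [hI3]; fun_prop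
    set P : ℝ → ℝ := fun x => c₂ * (deriv c x * (f x * deriv g x - deriv f x * g x)
        + deriv a x * (g x * deriv h x - deriv g x * h x)
        + deriv b x * (h x * deriv f x - deriv h x * f x)) with hPdef
    have hP : ContDiff ℝ ∞ P := by
      apply contDiff_const.mul
      exact ((hc1.mul ((hf0.mul hg1).sub (hf1.mul hg0))).add
        (ha1.mul ((hg0.mul hh1).sub (hg1.mul hh0)))).add
        (hb1.mul ((hh0.mul hf1).sub (hh1.mul hf0)))
    have hPp : Function.Periodic P (2 * π) := by
      intro x
      simp only [hPdef, hfp x, hgp x, hhp x, sd_per_deriv hfp x, sd_per_deriv hgp x,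
        sd_per_deriv hhp x, sd_per_deriv hap x, sd_per_deriv hbp x, sd_per_deriv hcp x]
    have hint := sd_per_int P hP hPp
    have dP : ∀ x, deriv P x
        = c₂ * ((deriv (deriv c) x * (f x * deriv g x - deriv f x * g x)
            + deriv c x * (f x * deriv (deriv g) x - deriv (deriv f) x * g x))
          + (deriv (deriv a) x * (g x * deriv h x - deriv g x * h x)
            + deriv a x * (g x * deriv (deriv h) x - deriv (deriv g) x * h x))
          + (deriv (deriv b) x * (h x * deriv f x - deriv h x * f x)
            + deriv b x * (h x * deriv (deriv f) x - deriv (deriv h) x * f x))) := by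
      intro x
      have h1 : HasDerivAt (fun x => f x * deriv g x - deriv f x * g x)
          (f x * deriv (deriv g) x - deriv (deriv f) x * g x) x := by
        have := ((Hf x).mul (Hg' x)).sub ((Hf' x).mul (Hg x))
        exact this.congr_deriv (by ring)
      have h2 : HasDerivAt (fun x => g x * deriv h x - deriv g x * h x)
          (g x * deriv (deriv h) x - deriv (deriv g) x * h x) x := by
        have := ((Hg x).mul (Hh' x)).sub ((Hg' x).mul (Hh x))
        exact this.congr_deriv (by ring)
      have h3 : HasDerivAt (fun x => h x * deriv f x - deriv h x * f x)
          (h x * deriv (deriv f) x - deriv (deriv h) x * f x) x := by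
        have := ((Hh x).mul (Hf' x)).sub ((Hh' x).mul (Hf x))
        exact this.congr_deriv (by ring)
      rw [hPdef]
      have hd := ((((Hc' x).mul h1).add ((Ha' x).mul h2)).add ((Hb' x).mul h3)).const_mul c₂
      exact hd.deriv
    have key2 : (∫ x in (0:ℝ)..(2*π), (I1 x + I2 x + I3 x))
        = ∫ x in (0:ℝ)..(2*π), deriv P x := by
      apply intervalIntegral.integral_congr
      intro x _
      rw [dP x]
      simp only [hI1, hI2, hI3]
      ring
    rw [E1, E2, E3, ← intervalIntegral.integral_add i1 i2,
      ← intervalIntegral.integral_add (i1.add i2) i3, key2, hint]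
end
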